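/- Let n ≥ 2 and r ≥ 2 be integers and let γ = (γ₀, …, γ_{r−1}) be an integer sequence with 0 ≤ γ_i ≤ r−2 for all 0 ≤ i ≤ r−1 and |γ_{i+1} − γ_i| ≤ 1 for all 0 ≤ i ≤ r−2. Then (E_{γ,r,n}^0, …, E_{γ,r,n}^{r−1})ᵀ = A · (E_{γ,r,n−1}^0, …, E_{γ,r,n−1}^{r−1})ᵀ, where A = (a_{ij})_{i,j=0}^{r−1} is the r × r matrix with a_{ij} = 0 if |i − j| ≤ γ_i, a_{ij} = 1 if j − i > γ_i, and a_{ij} = x if i − j > γ_i. -/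

import Mathlib

/-!
Deleting the last letter `i` of a word in `SW'_γ(n, r)` leaves a word in `SW'_γ(n - 1, r)` ending in
some `j` with `|i - j| > γ_i`, and this is a bijection onto all such words. The deleted step is an
ascent exactly when `j < i`, so each word ending in `j` contributes `a_ij` times its own weight.
-/

open Polynomial Finset

/-- The number of ascents of a word `w = (w₀, …, w_n)`: indices `i ∈ {0, …, n-1}`
with `w_i < w_{i+1}`. -/
def asc {n r : ℕ} (w : Fin (n + 1) → Fin r) : ℕ :=
  (Finset.univ.filter fun j : Fin n => w j.castSucc < w j.succ).card

/-- `Egamma r n γ i = E_{γ,r,n}^i`, the ascent generating polynomial over the words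
`w ∈ SW'_γ(n,r)` (words `(w₀, …, w_n) ∈ {0, …, r-1}^{n+1}` with `w₀ = 0` and
`|w_j - w_{j-1}| > γ_{w_j}` for `1 ≤ j ≤ n`) that end in the letter `i`. -/
noncomputable def Egamma (r n : ℕ) (γ : Fin r → ℤ) (i : ℕ) : Polynomial ℝ :=
  ∑ w ∈ Finset.univ.filter (fun w : Fin (n + 1) → Fin r =>
      (w 0 : ℕ) = 0 ∧
      (∀ j : Fin n, |((w j.succ : ℕ) : ℤ) - ((w j.castSucc : ℕ) : ℤ)| > γ (w j.succ)) ∧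
      (w (Fin.last n) : ℕ) = i),
    Polynomial.X ^ asc w

lemma sum_pi_snoc {M : Type*} [AddCommMonoid M] {α : Type*} [Fintype α] {m : ℕ}
    (f : (Fin (m + 1) → α) → M) : ∑ v, f v = ∑ w : Fin m → α, ∑ a, f (Fin.snoc w a) := by
  rw [← (Fin.snocEquiv fun _ => α).sum_comp, Fintype.sum_prod_type, sum_comm]
  rfl

section

variable {r : ℕ}

/-- `w ∈ SW'_γ(m, r)`. -/
def IsAdmissible {m : ℕ} (γ : Fin r → ℤ) (w : Fin (m + 1) → Fin r) : Prop :=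
  (w 0 : ℕ) = 0 ∧
    ∀ j : Fin m, |((w j.succ : ℕ) : ℤ) - ((w j.castSucc : ℕ) : ℤ)| > γ (w j.succ)

instance {m : ℕ} (γ : Fin r → ℤ) : DecidablePred (IsAdmissible (m := m) γ) :=
  fun _ => inferInstanceAs (Decidable (_ ∧ _))

lemma Egamma_eq_sum_ite (γ : Fin r → ℤ) (m i : ℕ) :
    Egamma r m γ i = ∑ w, if IsAdmissible γ w ∧ (w (Fin.last m) : ℕ) = i then X ^ asc w else 0 := by
  rw [Egamma, sum_filter]
  simp only [IsAdmissible, and_assoc]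

lemma asc_snoc {m : ℕ} (w : Fin (m + 1) → Fin r) (i : Fin r) :
    asc (Fin.snoc w i : Fin (m + 2) → Fin r) = asc w + if w (Fin.last m) < i then 1 else 0 := by
  rw [asc, asc, card_filter, card_filter, Fin.sum_univ_castSucc]
  congr 1
  · refine sum_congr rfl fun k _ => ?_
    simp [Fin.succ_castSucc, Fin.snoc_castSucc, -Fin.castSucc_succ]
  · simp [Fin.succ_last, Fin.snoc_castSucc, Fin.snoc_last]

lemma isAdmissible_snoc_iff {m : ℕ} (γ : Fin r → ℤ) (w : Fin (m + 1) → Fin r) (i : Fin r) :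
    IsAdmissible γ (Fin.snoc w i : Fin (m + 2) → Fin r) ↔
      IsAdmissible γ w ∧ γ i < |((i : ℕ) : ℤ) - ((w (Fin.last m) : ℕ) : ℤ)| := by
  rw [IsAdmissible, IsAdmissible, ← Fin.castSucc_zero, Fin.forall_fin_succ']
  simp only [Fin.succ_last, Fin.snoc_last, Fin.snoc_castSucc, Fin.succ_castSucc, and_assoc, gt_iff_lt]

/-- The weight of appending the letter `i` to a word ending in `j`: `0` if forbidden, `X` if it
creates an ascent. -/
noncomputable def transferCoeff (γ : Fin r → ℤ) (i j : Fin r) : ℝ[X] :=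
  if γ i < |((i : ℕ) : ℤ) - ((j : ℕ) : ℤ)| then (if j < i then X else 1) else 0

lemma Egamma_succ_eq_sum_filter (γ : Fin r → ℤ) (m : ℕ) (i : Fin r) :
    Egamma r (m + 1) γ i =
      ∑ w ∈ univ.filter (IsAdmissible γ), transferCoeff γ i (w (Fin.last m)) * X ^ asc w := by
  rw [Egamma_eq_sum_ite, sum_pi_snoc, sum_filter]
  refine sum_congr rfl fun w _ => ?_
  rw [Fintype.sum_eq_single i fun k hk => by simp [Fin.val_inj, hk]]
  simp only [Fin.snoc_last, isAdmissible_snoc_iff, asc_snoc, and_true, transferCoeff]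
  split_ifs <;> simp_all [pow_succ']

lemma sum_mul_Egamma_eq_sum_filter (γ : Fin r → ℤ) (m : ℕ) (c : Fin r → ℝ[X]) :
    ∑ j : Fin r, c j * Egamma r m γ j =
      ∑ w ∈ univ.filter (IsAdmissible γ), c (w (Fin.last m)) * X ^ asc w := by
  rw [← sum_fiberwise (univ.filter (IsAdmissible γ)) (fun w => w (Fin.last m))]
  refine sum_congr rfl fun j _ => ?_
  rw [Egamma_eq_sum_ite, mul_sum, sum_filter, sum_filter]
  refine sum_congr rfl fun w _ => ?_
  split_ifs <;> simp_all [Fin.val_inj]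

theorem Egamma_succ_eq_sum_transferCoeff_mul (γ : Fin r → ℤ) (m : ℕ) (i : Fin r) :
    Egamma r (m + 1) γ i = ∑ j : Fin r, transferCoeff γ i j * Egamma r m γ j := by
  rw [Egamma_succ_eq_sum_filter, sum_mul_Egamma_eq_sum_filter]

lemma transferCoeff_eq (γ : Fin r → ℤ) (A : Matrix (Fin r) (Fin r) ℝ[X]) (hA : ∀ i j : Fin r,
      (|((i : ℕ) : ℤ) - ((j : ℕ) : ℤ)| ≤ γ i → A i j = 0) ∧
      (((j : ℕ) : ℤ) - ((i : ℕ) : ℤ) > γ i → A i j = 1) ∧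
      (((i : ℕ) : ℤ) - ((j : ℕ) : ℤ) > γ i → A i j = Polynomial.X)) :
    transferCoeff γ = A := by
  funext i j
  obtain ⟨h0, h1, hX⟩ := hA i j
  rw [transferCoeff]
  split_ifs with hγ hji
  · rw [abs_of_pos (by omega)] at hγ
    exact (hX hγ).symm
  · rw [abs_sub_comm, abs_of_nonneg (by omega)] at hγ
    exact (h1 hγ).symm
  · exact (h0 (not_lt.mp hγ)).symm

end

theorem stmt18_general (n r : ℕ) (hn : 2 ≤ n) (γ : Fin r → ℤ)
    (A : Matrix (Fin r) (Fin r) (Polynomial ℝ))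
    (hA : ∀ i j : Fin r,
      (|((i : ℕ) : ℤ) - ((j : ℕ) : ℤ)| ≤ γ i → A i j = 0) ∧
      (((j : ℕ) : ℤ) - ((i : ℕ) : ℤ) > γ i → A i j = 1) ∧
      (((i : ℕ) : ℤ) - ((j : ℕ) : ℤ) > γ i → A i j = Polynomial.X)) :
    ∀ i : Fin r, Egamma r n γ (i : ℕ) = ∑ j : Fin r, A i j * Egamma r (n - 1) γ (j : ℕ) := by
  obtain ⟨m, rfl⟩ : ∃ m, n = m + 1 := ⟨n - 1, by omega⟩
  rw [← transferCoeff_eq γ A hA]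
  exact Egamma_succ_eq_sum_transferCoeff_mul γ m

/-- The recurrence `(E_{γ,r,n}^0, …, E_{γ,r,n}^{r-1})ᵀ = A · (E_{γ,r,n-1}^0, …, E_{γ,r,n-1}^{r-1})ᵀ`,
where `a_{ij} = 0` if `|i - j| ≤ γ_i`, `a_{ij} = 1` if `j - i > γ_i`, and
`a_{ij} = x` if `i - j > γ_i`. -/
theorem stmt18 (n r : ℕ) (hn : 2 ≤ n) (hr : 2 ≤ r) (γ : Fin r → ℤ)
    (hγ1 : ∀ i, 0 ≤ γ i ∧ γ i ≤ (r : ℤ) - 2)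
    (hγ2 : ∀ i j : Fin r, (j : ℕ) = (i : ℕ) + 1 → |γ j - γ i| ≤ 1)
    (A : Matrix (Fin r) (Fin r) (Polynomial ℝ))
    (hA : ∀ i j : Fin r,
      (|((i : ℕ) : ℤ) - ((j : ℕ) : ℤ)| ≤ γ i → A i j = 0) ∧
      (((j : ℕ) : ℤ) - ((i : ℕ) : ℤ) > γ i → A i j = 1) ∧
      (((i : ℕ) : ℤ) - ((j : ℕ) : ℤ) > γ i → A i j = Polynomial.X)) :
    ∀ i : Fin r, Egamma r n γ (i : ℕ) = ∑ j : Fin r, A i j * Egamma r (n - 1) γ (j : ℕ) :=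
  stmt18_general n r hn γ A hA
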